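/- arXiv:2309.09566 — 7 statements merged into one kernel-verified Lean document; each statement's English description precedes it below -/
import Mathlib

section
/- For every synchronous relation R ⊆ ℕ × ℕ there exist t ≥ 0 and p > 0 such that: (i) for all a, b ≥ t, (a + p, b + p) ∈ R if and only if (a, b) ∈ R; (ii) for all a, b with b ≥ a + p, (a, b + p) ∈ R if and only if (a, b) ∈ R; (iii) for all a, b with a ≥ b + p, (a + p, b) ∈ R if and only if (a, b) ∈ R. -/
/-- Encoding of a pair of naturals as a word over the alphabet `Fin 3`,
where letter `0` stands for `B`, `1` for `L`, `2` for `R`. -/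
def encPair (k l : ℕ) : List (Fin 3) :=
  (List.range (max k l)).map (fun i => if i < min k l then 0 else if i < k then 1 else 2)

/-- A binary relation on ℕ is synchronous if the language of encodings of its pairs
is regular. -/
def SyncRel (R : ℕ → ℕ → Prop) : Prop :=
  Language.IsRegular {w : List (Fin 3) | ∃ k l, R k l ∧ encPair k l = w}

/-- The support of a binary relation on ℕ. -/
def supp (R : ℕ → ℕ → Prop) : Set ℕ := {x | ∃ y, R x y ∨ R y x}

/-- A (strict partial) order on ℕ: a transitive relation with no 2-cycle
(in particular irreflexive). -/
def IsOrderRel (R : ℕ → ℕ → Prop) : Prop :=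
  (∀ x y z, R x y → R y z → R x z) ∧ ¬∃ x y, R x y ∧ R y x

/-- The relation is linear if any two distinct elements of the support are comparable. -/
def IsLinearRel (R : ℕ → ℕ → Prop) : Prop :=
  ∀ x ∈ supp R, ∀ y ∈ supp R, x ≠ y → R x y ∨ R y x

/-- The restriction of a relation on ℕ to its support. -/
def restrict (R : ℕ → ℕ → Prop) : supp R → supp R → Prop := fun a b => R a b

/-!
Read by a DFA with `n` states, `enc(k, ℓ)` is a block of `B`s of length `min k ℓ` followed by a
block of `L`s or of `R`s, so the state reached is obtained by iterating three self-maps of the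
state set. For a self-map of an `n`-element set, every orbit has entered its cycle after `n`
steps, and the length of that cycle divides `n!`; so lengthening a block that is already at
least `n` long by `n!` does not change the state reached, and `t = n`, `p = n!` work.
-/

open scoped Nat

namespace Function

open Fintype

variable {α : Type*} [Fintype α] (f : α → α) (x : α)

theorem iterate_card_mem_periodicPts : f^[card α] x ∈ periodicPts f := by
  obtain ⟨i, j, hij, heq⟩ :=
    exists_ne_map_eq_of_card_lt (fun i : Fin (card α + 1) => f^[i] x) (by simp)
  wlog hlt : (i : ℕ) < j generalizing i j
  · exact this j i hij.symm heq.symm (lt_of_le_of_ne (not_lt.mp hlt) (Fin.val_ne_of_ne hij.symm))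
  have hper : IsPeriodicPt f (j - i) (f^[i] x) := by
    change f^[j - i] (f^[i] x) = f^[i] x
    rw [← iterate_add_apply, Nat.sub_add_cancel hlt.le]
    exact heq.symm
  have hcard := hper.apply_iterate (card α - i)
  rw [← iterate_add_apply, Nat.sub_add_cancel (by omega)] at hcard
  exact mk_mem_periodicPts (by omega) hcard

theorem iterate_add_factorial_card {m : ℕ} (hm : card α ≤ m) :
    f^[m + (card α)!] x = f^[m] x := by
  obtain ⟨k, rfl⟩ := Nat.exists_eq_add_of_le' hm
  rw [add_comm, iterate_add_apply, iterate_add_apply]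
  exact (isPeriodicPt_factorial_card_of_mem_periodicPts
    (iterate_card_mem_periodicPts f x)).apply_iterate k

end Function

theorem encPair_eq_replicate (k l : ℕ) :
    encPair k l = List.replicate (min k l) 0 ++ List.replicate (k - l) 1
      ++ List.replicate (l - k) 2 := by
  apply List.ext_getElem
  · simp only [encPair, List.length_map, List.length_range, List.length_append,
      List.length_replicate]
    omega
  · intro i hi _
    simp only [encPair, List.length_map, List.length_range] at hi
    simp only [encPair, List.getElem_map, List.getElem_range, List.getElem_append,
      List.getElem_replicate, List.length_append, List.length_replicate]
    split_ifs <;> first | rfl | omega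

theorem encPair_injective : Function.Injective2 encPair := by
  intro k a l b h
  simp only [encPair_eq_replicate] at h
  have h0 := congrArg (List.count 0) h
  have h1 := congrArg (List.count 1) h
  have h2 := congrArg (List.count 2) h
  simp only [List.append_assoc, List.count_append, List.count_replicate_self,
    List.count_replicate, Fin.reduceBEq, Bool.false_eq_true, ↓reduceIte, add_zero, zero_add]
    at h0 h1 h2
  omega

theorem SyncRel.exists_dfa {R : ℕ → ℕ → Prop} (hR : SyncRel R) :
    ∃ (σ : Type) (_ : Fintype σ) (M : DFA (Fin 3) σ),
      ∀ a b, R a b ↔ M.eval (encPair a b) ∈ M.accept := by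
  obtain ⟨σ, _, M, hM⟩ := hR
  refine ⟨σ, inferInstance, M, fun a b => ?_⟩
  rw [← DFA.mem_accepts, hM]
  constructor
  · exact fun h => ⟨a, b, h, rfl⟩
  · rintro ⟨k, l, hkl, h⟩
    obtain ⟨rfl, rfl⟩ := encPair_injective h
    exact hkl

namespace DFA

variable {α σ : Type*}

theorem evalFrom_replicate (M : DFA α σ) (s : σ) (a : α) (n : ℕ) :
    M.evalFrom s (List.replicate n a) = (M.step · a)^[n] s := by
  induction n generalizing s with
  | zero => rfl
  | succ n ih => exact ih (M.step s a)

variable (M : DFA (Fin 3) σ)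

theorem eval_encPair (k l : ℕ) :
    M.eval (encPair k l) =
      (M.step · 2)^[l - k] ((M.step · 1)^[k - l] ((M.step · 0)^[min k l] M.start)) := by
  rw [encPair_eq_replicate, eval, evalFrom_of_append, evalFrom_of_append, evalFrom_replicate,
    evalFrom_replicate, evalFrom_replicate]

variable [Fintype σ] {a b : ℕ}

open Fintype

theorem eval_encPair_add_add (ha : card σ ≤ a) (hb : card σ ≤ b) :
    M.eval (encPair (a + (card σ)!) (b + (card σ)!)) = M.eval (encPair a b) := by
  rw [eval_encPair, eval_encPair, Nat.add_sub_add_right, Nat.add_sub_add_right,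
    Nat.add_min_add_right, Function.iterate_add_factorial_card _ _ (le_min ha hb)]

theorem eval_encPair_right_add (hab : a + (card σ)! ≤ b) :
    M.eval (encPair a (b + (card σ)!)) = M.eval (encPair a b) := by
  have hn := Nat.self_le_factorial (card σ)
  rw [eval_encPair, eval_encPair, show min a (b + (card σ)!) = min a b by omega,
    show a - (b + (card σ)!) = a - b by omega, show b + (card σ)! - a = b - a + (card σ)! by omega,
    Function.iterate_add_factorial_card _ _ (by omega)]

theorem eval_encPair_left_add (hba : b + (card σ)! ≤ a) :
    M.eval (encPair (a + (card σ)!) b) = M.eval (encPair a b) := by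
  have hn := Nat.self_le_factorial (card σ)
  rw [eval_encPair, eval_encPair, show min (a + (card σ)!) b = min a b by omega,
    show b - (a + (card σ)!) = b - a by omega, show a + (card σ)! - b = a - b + (card σ)! by omega,
    Function.iterate_add_factorial_card _ _ (by omega)]

end DFA

theorem sync_periodicity (R : ℕ → ℕ → Prop) (hR : SyncRel R) :
    ∃ t p : ℕ, 0 < p ∧
      (∀ a b, t ≤ a → t ≤ b → (R (a + p) (b + p) ↔ R a b)) ∧
      (∀ a b, a + p ≤ b → (R a (b + p) ↔ R a b)) ∧
      (∀ a b, b + p ≤ a → (R (a + p) b ↔ R a b)) := by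
  obtain ⟨σ, _, M, hM⟩ := hR.exists_dfa
  refine ⟨Fintype.card σ, (Fintype.card σ)!, Nat.factorial_pos _, ?_, ?_, ?_⟩
  · intro a b ha hb
    rw [hM, hM, M.eval_encPair_add_add ha hb]
  · intro a b hab
    rw [hM, hM, M.eval_encPair_right_add hab]
  · intro a b hba
    rw [hM, hM, M.eval_encPair_left_add hba]
end

section
/- If R ⊆ ℕⁿ is synchronous, then for all integers m > r ≥ 0 the relation R_{m,r} = {(m·x₁ + r, …, m·xₙ + r) : (x₁,…,xₙ) ∈ R} is synchronous. Moreover, if n = 2 and R is an order on ℕ, then R_{m,r} is an order on ℕ and (supp(R_{m,r}), R_{m,r}) is order-isomorphic to (supp(R), R). -/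
/-- Encoding of a tuple `x ∈ ℕⁿ` as a word of length `max_i x_i` over the alphabet
of vectors in `{0,1}ⁿ`: the `j`-th letter has `i`-th component `1` iff `j < x i`. -/
def encVec {n : ℕ} (x : Fin n → ℕ) : List (Fin n → Bool) :=
  (List.range (Finset.univ.sup x)).map (fun j i => decide (j < x i))

/-- A relation `R ⊆ ℕⁿ` is synchronous if the language of encodings of its tuples
is regular. -/
def SyncRelN {n : ℕ} (R : Set (Fin n → ℕ)) : Prop :=
  Language.IsRegular {w : List (Fin n → Bool) | ∃ x ∈ R, encVec x = w}

/-- A binary relation on ℕ, viewed as a set of pairs in `Fin 2 → ℕ`, is synchronous. -/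
def SyncRel2 (R : ℕ → ℕ → Prop) : Prop :=
  SyncRelN {x : Fin 2 → ℕ | R (x 0) (x 1)}

/-- The binary relation `R_{m,r}` obtained from `R` by `x ↦ m·x + r`. -/
def scaledRel (R : ℕ → ℕ → Prop) (m r : ℕ) : ℕ → ℕ → Prop :=
  fun a b => ∃ x y, R x y ∧ a = m * x + r ∧ b = m * y + r

/-!
Writing `h` for the morphism repeating every letter `m` times, `enc(m x + r) = 1ʳ · h(enc x)`,
so the first claim follows from closure of regular languages under prefixing by a fixed word and
under morphic images. Both closure properties come from Myhill–Nerode: every left quotient of the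
new language is a union of members of a finite family built from the finitely many left quotients
of the old one. For the second claim, `x ↦ m x + r` is injective, and the image of a relation
under an injective map is again an order, isomorphic to the original one on supports.
-/

open Function

namespace List

variable {α β : Type*}

/-- A cut of `w.flatMap f` falls inside the image of a single letter; `t` is the part of that
image lying after the cut. -/
theorem exists_flatMap_eq_append (f : α → List β) {x y : List β} {w : List α}
    (h : w.flatMap f = x ++ y) :
    ∃ v u t, w = v ++ u ∧ v.flatMap f = x ++ t ∧ y = t ++ u.flatMap f ∧
      (t = [] ∨ ∃ a, t <:+ f a) := by
  induction w generalizing x with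
  | nil =>
    obtain ⟨rfl, rfl⟩ := append_eq_nil_iff.mp h.symm
    exact ⟨[], [], [], by simp⟩
  | cons a w ih =>
    rw [flatMap_cons] at h
    rcases append_eq_append_iff.mp h with ⟨c, rfl, hc⟩ | ⟨t, hfa, rfl⟩
    · obtain ⟨v, u, t, rfl, hv, rfl, ht⟩ := ih hc
      exact ⟨a :: v, u, t, rfl, by simp [hv], rfl, ht⟩
    · exact ⟨[a], w, t, rfl, by simp [hfa], rfl, .inr ⟨a, x, hfa.symm⟩⟩

theorem map_range_mul_div (f : ℕ → β) {m : ℕ} (hm : 0 < m) (k : ℕ) :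
    (range (m * k)).map (fun j => f (j / m)) = ((range k).map f).flatMap (replicate m) := by
  induction k with
  | zero => simp
  | succ k ih =>
    have hblock : (range m).map (fun j => f ((m * k + j) / m)) = replicate m (f k) := by
      rw [eq_replicate_iff]
      refine ⟨by simp, fun b hb => ?_⟩
      obtain ⟨j, hj, rfl⟩ := mem_map.mp hb
      rw [Nat.mul_add_div hm, Nat.div_eq_of_lt (mem_range.mp hj), add_zero]
    rw [Nat.mul_succ, range_add, map_append, ih, range_succ, map_append, flatMap_append,
      map_map]
    simp [comp_def, hblock]

end List

namespace Language

variable {α β : Type*}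

theorem IsRegular.of_leftQuotient_covered {L : Language α} (F : Set (Language α)) (hF : F.Finite)
    (hcover : ∀ x, ∀ y ∈ L.leftQuotient x, ∃ G ∈ F, y ∈ G ∧ G ≤ L.leftQuotient x) :
    L.IsRegular := by
  refine .of_finite_range_leftQuotient ((hF.powerset.image Set.sUnion).subset ?_)
  rintro _ ⟨x, rfl⟩
  refine ⟨{G ∈ F | G ≤ L.leftQuotient x}, fun G hG => hG.1, ?_⟩
  apply subset_antisymm
  · exact Set.sUnion_subset fun G hG => hG.2
  · intro y hy
    obtain ⟨G, hGF, hyG, hGx⟩ := hcover x y hy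
    exact ⟨G, ⟨hGF, hGx⟩, hyG⟩

theorem IsRegular.image_append_left {L : Language α} (hL : L.IsRegular) (p : List α) :
    IsRegular ((p ++ ·) '' L) := by
  refine .of_leftQuotient_covered
    ((fun t => ((t ++ ·) '' L : Language α)) '' {t | t ∈ p.tails} ∪ Set.range L.leftQuotient)
    (((List.finite_toSet _).image _).union hL.finite_range_leftQuotient) ?_
  rintro x y ⟨w, hw, hpw⟩
  rcases List.append_eq_append_iff.mp hpw with ⟨c, rfl, rfl⟩ | ⟨c, rfl, rfl⟩
  · refine ⟨L.leftQuotient c, .inr ⟨c, rfl⟩, hw, ?_⟩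
    rintro z hz
    exact ⟨c ++ z, hz, by simp⟩
  · refine ⟨(c ++ ·) '' L, .inl ⟨c, by simp, rfl⟩, ⟨w, hw, rfl⟩, ?_⟩
    rintro _ ⟨w', hw', rfl⟩
    exact ⟨w', hw', by simp⟩

theorem IsRegular.image_flatMap [Finite α] {L : Language α} (hL : L.IsRegular) (f : α → List β) :
    IsRegular ((·.flatMap f) '' L) := by
  have hT : {t : List β | t = [] ∨ ∃ a, t <:+ f a}.Finite := by
    refine ((Set.finite_iUnion fun a => List.finite_toSet (f a).tails).insert []).subset ?_
    rintro t (rfl | ⟨a, ht⟩)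
    · exact Set.mem_insert _ _
    · exact .inr (Set.mem_iUnion.mpr ⟨a, (List.mem_tails _ _).mpr ht⟩)
  refine .of_leftQuotient_covered
    (Set.image2 (fun t Q => ((t ++ ·) '' ((·.flatMap f) '' Q) : Language β)) _
      (Set.range L.leftQuotient)) (hT.image2 _ hL.finite_range_leftQuotient) ?_
  rintro x y ⟨w, hw, hxy⟩
  obtain ⟨v, u, t, rfl, hv, rfl, ht⟩ := List.exists_flatMap_eq_append f hxy
  refine ⟨_, ⟨t, ht, _, ⟨v, rfl⟩, rfl⟩, ⟨_, ⟨u, hw, rfl⟩, rfl⟩, ?_⟩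
  rintro _ ⟨_, ⟨u', hu', rfl⟩, rfl⟩
  exact ⟨v ++ u', hu', by simp [← List.append_assoc, ← hv]⟩

end Language

theorem Finset.sup_mul_add {ι : Type*} {s : Finset ι} (hs : s.Nonempty) (x : ι → ℕ) (m r : ℕ) :
    s.sup (fun i => m * x i + r) = m * s.sup x + r := by
  obtain ⟨i, hi, hxi⟩ := s.exists_mem_eq_sup hs x
  refine le_antisymm (Finset.sup_le fun j hj => ?_) ?_
  · have := s.le_sup (f := x) hj
    gcongr
  · rw [hxi]
    exact s.le_sup (f := fun i => m * x i + r) hi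

/-- The prefix `encVec (fun _ => r)` is `1ʳ` for `n > 0` but empty for `n = 0`, where every
encoding is empty. -/
theorem encVec_mul_add {n : ℕ} (x : Fin n → ℕ) {m : ℕ} (hm : 0 < m) (r : ℕ) :
    encVec (fun i => m * x i + r)
      = encVec (fun _ => r) ++ (encVec x).flatMap (List.replicate m) := by
  rcases n.eq_zero_or_pos with rfl | hn
  · simp [encVec]
  have huniv : (Finset.univ : Finset (Fin n)).Nonempty := ⟨⟨0, hn⟩, Finset.mem_univ _⟩
  unfold encVec
  rw [Finset.sup_mul_add huniv, Finset.sup_const huniv, add_comm, List.range_add,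
    List.map_append, List.map_map, ← List.map_range_mul_div _ hm]
  congr 1
  · refine List.map_congr_left fun j hj => funext fun i => ?_
    have := List.mem_range.mp hj
    simp only [decide_eq_decide]
    omega
  · refine List.map_congr_left fun j _ => funext fun i => ?_
    simp only [comp_apply, decide_eq_decide, Nat.div_lt_iff_lt_mul hm]
    rw [mul_comm]
    omega

theorem SyncRelN.image_mul_add {n : ℕ} {R : Set (Fin n → ℕ)} (hR : SyncRelN R) {m : ℕ}
    (hm : 0 < m) (r : ℕ) : SyncRelN ((fun x i => m * x i + r) '' R) := by
  have hlang : encVec '' ((fun x i => m * x i + r) '' R)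
      = (encVec (fun _ => r) ++ ·) '' ((·.flatMap (List.replicate m)) '' (encVec '' R)) := by
    simp only [Set.image_image, encVec_mul_add _ hm]
  change Language.IsRegular (encVec '' _)
  rw [hlang]
  exact (Language.IsRegular.image_flatMap hR _).image_append_left _

section MapRel

variable {R : ℕ → ℕ → Prop} {f : ℕ → ℕ}

theorem IsOrderRel.map (hR : IsOrderRel R) (hf : Injective f) :
    IsOrderRel (Relation.Map R f f) := by
  refine ⟨?_, ?_⟩
  · rintro _ _ _ ⟨x, y, hxy, rfl, rfl⟩ ⟨y', z, hyz, hy, rfl⟩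
    obtain rfl := hf hy
    exact ⟨x, z, hR.1 x y' z hxy hyz, rfl, rfl⟩
  · rintro ⟨_, _, ⟨x, y, hxy, rfl, rfl⟩, hyx⟩
    rw [Relation.map_apply_apply hf hf] at hyx
    exact hR.2 ⟨x, y, hxy, hyx⟩

theorem supp_map : supp (Relation.Map R f f) = f '' supp R := by
  ext a
  constructor
  · rintro ⟨_, ⟨x, y, hxy, rfl, rfl⟩ | ⟨y, x, hyx, rfl, rfl⟩⟩
    · exact ⟨x, ⟨y, .inl hxy⟩, rfl⟩
    · exact ⟨x, ⟨y, .inr hyx⟩, rfl⟩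
  · rintro ⟨x, ⟨y, hxy | hyx⟩, rfl⟩
    · exact ⟨f y, .inl ⟨x, y, hxy, rfl, rfl⟩⟩
    · exact ⟨f y, .inr ⟨y, x, hyx, rfl, rfl⟩⟩

noncomputable def relIsoRestrictMap (hf : Injective f) :
    restrict (Relation.Map R f f) ≃r restrict R :=
  RelIso.symm
    { toEquiv := (Equiv.Set.image f (supp R) hf).trans (Equiv.setCongr supp_map.symm)
      map_rel_iff' := Relation.map_apply_apply hf hf _ _ _ }

end MapRel

theorem scaledRel_eq_map (R : ℕ → ℕ → Prop) (m r : ℕ) :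
    scaledRel R m r = Relation.Map R (fun x => m * x + r) (fun x => m * x + r) := by
  ext a b
  simp only [scaledRel, Relation.map_apply, eq_comm]

theorem setOf_map_fin_two (R : ℕ → ℕ → Prop) (f : ℕ → ℕ) :
    {x : Fin 2 → ℕ | Relation.Map R f f (x 0) (x 1)} = (f ∘ ·) '' {x | R (x 0) (x 1)} := by
  ext y
  constructor
  · rintro ⟨a, b, hab, h0, h1⟩
    refine ⟨![a, b], hab, funext fun i => ?_⟩
    fin_cases i <;> simp [h0, h1]
  · rintro ⟨x, hx, rfl⟩
    exact ⟨x 0, x 1, hx, rfl, rfl⟩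

theorem scaled_relation_sync :
    (∀ (n : ℕ) (R : Set (Fin n → ℕ)) (m r : ℕ), r < m → SyncRelN R →
      SyncRelN {y | ∃ x ∈ R, y = fun i => m * x i + r}) ∧
    (∀ (R : ℕ → ℕ → Prop) (m r : ℕ), r < m → SyncRel2 R → IsOrderRel R →
      SyncRel2 (scaledRel R m r) ∧ IsOrderRel (scaledRel R m r) ∧
      Nonempty (restrict (scaledRel R m r) ≃r restrict R)) := by
  refine ⟨fun n R m r hr hR => ?_, fun R m r hr hR hord => ?_⟩
  · have himage : {y | ∃ x ∈ R, y = fun i => m * x i + r} = (fun x i => m * x i + r) '' R := by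
      ext y
      simp only [Set.mem_ofPred_eq, Set.mem_image, eq_comm]
    exact himage ▸ hR.image_mul_add (by omega) r
  · have hf : Injective (fun x => m * x + r) :=
      (add_left_injective r).comp (mul_right_injective₀ (by omega))
    rw [scaledRel_eq_map]
    refine ⟨?_, hord.map hf, ⟨relIsoRestrictMap hf⟩⟩
    rw [SyncRel2, setOf_map_fin_two]
    exact hR.image_mul_add (by omega) r
end

section
/- Let R and R' be synchronous orders on ℕ with disjoint supports. Then the relation R + R' := R ∪ R' ∪ (supp(R) × supp(R')) is a synchronous order on ℕ, and (supp(R + R'), R + R') is order-isomorphic to the lexicographic sum of (supp(R), R) followed by (supp(R'), R') (every element of supp(R) precedes every element of supp(R'), and each part keeps its order). -/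
/-- The sum `R + R'` of two orders: `R ∪ R' ∪ (supp R × supp R')`. -/
def sumRel (R S : ℕ → ℕ → Prop) : ℕ → ℕ → Prop :=
  fun a b => R a b ∨ S a b ∨ (a ∈ supp R ∧ b ∈ supp S)


/-!
A set `A ⊆ ℕ` with finitely many shifts `{n | m + n ∈ A}` is, by Myhill–Nerode, a regular unary
language (the shifts are its left quotients). Writing `#₁ w`, `#₂ w` for the numbers of letters
`B` or `L`, resp. `B` or `R`, the language of `R + R'` is
`L_R ∪ L_R' ∪ (E ∩ {w | #₁ w ∈ supp R} ∩ {w | #₂ w ∈ supp R'})`, where `E = B*(L* ∪ R*)`, the set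
of all encodings, consists of the words in which only `B` precedes a different letter. All pieces
are regular by Myhill–Nerode: a left quotient of `E` by `u` depends only on the letters of `u`, one
of `{w | #₁ w ∈ A}` only on a shift of `A`; and `supp R = #₁ '' L_R ∪ #₂ '' L_R` has finitely many
shifts because the shift at `m` of `#₁ '' L` is determined by the left quotients of `L` by the
words `u` with `#₁ u = m`.

The order and the isomorphism come from `supp (R + R') = supp R ⊔ supp R'`: each mixed case of
transitivity or asymmetry would put an element in both supports.
-/

def HasFiniteShifts (A : Set ℕ) : Prop :=
  (Set.range fun m : ℕ => (m + ·) ⁻¹' A).Finite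

theorem HasFiniteShifts.union {A B : Set ℕ} (hA : HasFiniteShifts A) (hB : HasFiniteShifts B) :
    HasFiniteShifts (A ∪ B) :=
  (hA.image2 (· ∪ ·) hB).subset <| by
    rintro _ ⟨m, rfl⟩
    exact ⟨_, ⟨m, rfl⟩, _, ⟨m, rfl⟩, rfl⟩

theorem List.exists_append_countP_eq {α : Type*} (p : α → Bool) :
    ∀ {w : List α} {m : ℕ}, m ≤ w.countP p → ∃ u v, u ++ v = w ∧ u.countP p = m
  | _, 0, _ => ⟨[], _, rfl, rfl⟩
  | a :: w, m + 1, h => by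
    by_cases ha : p a
    · obtain ⟨u, v, rfl, hu⟩ := exists_append_countP_eq p (w := w) (m := m)
        (by simpa [List.countP_cons, ha] using h)
      exact ⟨a :: u, v, rfl, by simp [ha, hu]⟩
    · obtain ⟨u, v, rfl, hu⟩ := exists_append_countP_eq p (w := w) (m := m + 1)
        (by simpa [List.countP_cons, ha] using h)
      exact ⟨a :: u, v, rfl, by simp [ha, hu]⟩

namespace Language

variable {α : Type*}

theorem isRegular_setOf_countP_mem (p : α → Bool) {A : Set ℕ} (hA : HasFiniteShifts A) :
    IsRegular {w : List α | w.countP p ∈ A} := by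
  refine .of_finite_range_leftQuotient <|
    (hA.image fun B => {v : List α | v.countP p ∈ B}).subset ?_
  rintro _ ⟨u, rfl⟩
  refine ⟨_, ⟨u.countP p, rfl⟩, ?_⟩
  ext v
  change u.countP p + v.countP p ∈ A ↔ (u ++ v).countP p ∈ A
  rw [List.countP_append]

theorem isRegular_setOf_pairwise [Finite α] (r : α → α → Prop) :
    IsRegular {w : List α | w.Pairwise r} := by
  refine .of_finite_range_leftQuotient <| (Set.finite_range fun PS : Prop × Set α =>
    {v : List α | PS.1 ∧ v.Pairwise r ∧ ∀ a ∈ PS.2, ∀ b ∈ v, r a b}).subset ?_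
  rintro _ ⟨u, rfl⟩
  refine ⟨(u.Pairwise r, {a | a ∈ u}), ?_⟩
  ext v
  change _ ↔ (u ++ v).Pairwise r
  simp [List.pairwise_append]

theorem IsRegular.hasFiniteShifts_image_countP {L : Language α} (h : L.IsRegular) (p : α → Bool) :
    HasFiniteShifts ((·.countP p) '' L) := by
  refine (h.finite_range_leftQuotient.finite_subsets.image
    fun Q => {n | ∃ q ∈ Q, ∃ v ∈ q, v.countP p = n}).subset ?_
  rintro _ ⟨m, rfl⟩
  refine ⟨{q | ∃ u, u.countP p = m ∧ L.leftQuotient u = q}, ?_, ?_⟩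
  · rintro _ ⟨u, -, rfl⟩
    exact ⟨u, rfl⟩
  ext n
  constructor
  · rintro ⟨_, ⟨u, rfl, rfl⟩, v, hv, rfl⟩
    exact ⟨u ++ v, hv, List.countP_append⟩
  · rintro ⟨w, hw, hcount : w.countP p = m + n⟩
    obtain ⟨u, v, rfl, hu⟩ := List.exists_append_countP_eq p (w := w) (m := m) (by omega)
    refine ⟨_, ⟨u, hu, rfl⟩, v, hw, ?_⟩
    rw [List.countP_append] at hcount
    omega

end Language

theorem encPair_zero_left (l : ℕ) : encPair 0 l = List.replicate l 2 := by
  simp [encPair, List.map_const']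

theorem encPair_zero_right (k : ℕ) : encPair k 0 = List.replicate k 1 := by
  simp +contextual [encPair, List.eq_replicate_iff]

theorem encPair_succ_succ (k l : ℕ) : encPair (k + 1) (l + 1) = 0 :: encPair k l := by
  simp [encPair, Nat.succ_max_succ, List.range_succ_eq_map]

theorem countP_encPair_fst (k l : ℕ) : (encPair k l).countP (· ≠ 2) = k := by
  induction k generalizing l with
  | zero => simp [encPair_zero_left]
  | succ k ih =>
    cases l with
    | zero => simp [encPair_zero_right, List.countP_replicate]
    | succ l => rw [encPair_succ_succ, List.countP_cons, ih]; rfl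

theorem countP_encPair_snd (k l : ℕ) : (encPair k l).countP (· ≠ 1) = l := by
  induction k generalizing l with
  | zero => simp [encPair_zero_left, List.countP_replicate]
  | succ k ih =>
    cases l with
    | zero => simp [encPair_zero_right]
    | succ l => rw [encPair_succ_succ, List.countP_cons, ih]; rfl

theorem pairwise_encPair (k l : ℕ) : (encPair k l).Pairwise (fun a b => a = 0 ∨ a = b) := by
  induction k generalizing l with
  | zero => simp [encPair_zero_left, List.pairwise_replicate]
  | succ k ih =>
    cases l <;> simp [encPair_zero_right, encPair_succ_succ, List.pairwise_replicate, ih]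

theorem exists_encPair_eq_of_pairwise :
    ∀ {w : List (Fin 3)}, w.Pairwise (fun a b => a = 0 ∨ a = b) → ∃ k l, encPair k l = w
  | [], _ => ⟨0, 0, rfl⟩
  | a :: w, h => by
    rw [List.pairwise_cons] at h
    fin_cases a
    · obtain ⟨k, l, rfl⟩ := exists_encPair_eq_of_pairwise h.2
      exact ⟨k + 1, l + 1, encPair_succ_succ k l⟩
    · refine ⟨w.length + 1, 0, ?_⟩
      rw [encPair_zero_right, eq_comm, List.eq_replicate_iff]
      simpa [eq_comm] using h.1
    · refine ⟨0, w.length + 1, ?_⟩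
      rw [encPair_zero_left, eq_comm, List.eq_replicate_iff]
      simpa [eq_comm] using h.1

section SumRel

variable {R S : ℕ → ℕ → Prop}

theorem syncRel_prod {A B : Set ℕ} (hA : HasFiniteShifts A) (hB : HasFiniteShifts B) :
    SyncRel fun x y => x ∈ A ∧ y ∈ B := by
  unfold SyncRel
  refine (congrArg Language.IsRegular ?_).mpr
    (((Language.isRegular_setOf_pairwise (fun a b : Fin 3 => a = 0 ∨ a = b)).inf
      (Language.isRegular_setOf_countP_mem (· ≠ 2) hA)).inf
      (Language.isRegular_setOf_countP_mem (· ≠ 1) hB))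
  ext w
  change _ ↔ (w.Pairwise _ ∧ w.countP _ ∈ A) ∧ w.countP _ ∈ B
  constructor
  · rintro ⟨k, l, ⟨hk, hl⟩, rfl⟩
    exact ⟨⟨pairwise_encPair k l, by rwa [countP_encPair_fst]⟩, by rwa [countP_encPair_snd]⟩
  · rintro ⟨⟨hw, hA⟩, hB⟩
    obtain ⟨k, l, rfl⟩ := exists_encPair_eq_of_pairwise hw
    rw [countP_encPair_fst] at hA
    rw [countP_encPair_snd] at hB
    exact ⟨k, l, ⟨hA, hB⟩, rfl⟩

theorem SyncRel.or (hR : SyncRel R) (hS : SyncRel S) :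
    SyncRel fun x y => R x y ∨ S x y := by
  unfold SyncRel
  refine (congrArg Language.IsRegular ?_).mpr (hR.add hS)
  ext w
  change (∃ k l, _) ↔ (∃ k l, _) ∨ (∃ k l, _)
  grind

theorem SyncRel.hasFiniteShifts_supp (h : SyncRel R) : HasFiniteShifts (supp R) := by
  have hsupp : supp R = (·.countP (· ≠ 2)) '' {w | ∃ k l, R k l ∧ encPair k l = w} ∪
      (·.countP (· ≠ 1)) '' {w | ∃ k l, R k l ∧ encPair k l = w} := by
    ext x
    simp only [supp, Set.mem_union, Set.mem_image]
    constructor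
    · rintro ⟨y, h | h⟩
      · exact .inl ⟨_, ⟨x, y, h, rfl⟩, countP_encPair_fst x y⟩
      · exact .inr ⟨_, ⟨y, x, h, rfl⟩, countP_encPair_snd y x⟩
    · rintro (⟨_, ⟨k, l, h, rfl⟩, rfl⟩ | ⟨_, ⟨k, l, h, rfl⟩, rfl⟩)
      · exact ⟨l, .inl (by rwa [countP_encPair_fst])⟩
      · exact ⟨k, .inr (by rwa [countP_encPair_snd])⟩
  rw [hsupp]
  exact (h.hasFiniteShifts_image_countP _).union (h.hasFiniteShifts_image_countP _)

theorem syncRel_sumRel (hR : SyncRel R) (hS : SyncRel S) :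
    SyncRel (sumRel R S) :=
  hR.or (hS.or (syncRel_prod hR.hasFiniteShifts_supp hS.hasFiniteShifts_supp))

theorem isOrderRel_sumRel (hR : IsOrderRel R) (hS : IsOrderRel S)
    (hdisj : Disjoint (supp R) (supp S)) : IsOrderRel (sumRel R S) := by
  have hd : ∀ x, (∃ y, R x y ∨ R y x) → (∃ y, S x y ∨ S y x) → False :=
    fun _ hxR hxS => Set.disjoint_left.mp hdisj hxR hxS
  obtain ⟨hRt, hRa⟩ := hR
  obtain ⟨hSt, hSa⟩ := hS
  unfold sumRel supp at *
  refine ⟨fun x y z hxy hyz => ?_, fun ⟨x, y, hxy, hyx⟩ => ?_⟩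
  · grind
  · grind

theorem supp_sumRel : supp (sumRel R S) = supp R ∪ supp S := by
  ext x
  simp only [supp, sumRel, Set.mem_union]
  grind

open Classical in
noncomputable def restrictSumRelIso (hdisj : Disjoint (supp R) (supp S)) :
    restrict (sumRel R S) ≃r Sum.Lex (restrict R) (restrict S) :=
  RelIso.symm
    { toEquiv := (Equiv.Set.union hdisj).symm.trans (Equiv.setCongr supp_sumRel.symm)
      map_rel_iff' := by
        have hd : ∀ x, (∃ y, R x y ∨ R y x) → (∃ y, S x y ∨ S y x) → False :=
          fun _ hxR hxS => Set.disjoint_left.mp hdisj hxR hxS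
        rintro (⟨a, ha⟩ | ⟨a, ha⟩) (⟨b, hb⟩ | ⟨b, hb⟩) <;>
          simp only [restrict, sumRel, Equiv.trans_apply, Equiv.setCongr_apply,
            Equiv.Set.union_symm_apply_left, Equiv.Set.union_symm_apply_right, Sum.lex_inl_inl,
            Sum.lex_inr_inr, Sum.lex_inr_inl, Sum.Lex.sep, iff_true, iff_false] <;>
          unfold supp at * <;> grind }

end SumRel

theorem sum_of_synchronous_orders (R R' : ℕ → ℕ → Prop)
    (hsR : SyncRel R) (hsR' : SyncRel R')
    (hoR : IsOrderRel R) (hoR' : IsOrderRel R')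
    (hdisj : Disjoint (supp R) (supp R')) :
    SyncRel (sumRel R R') ∧ IsOrderRel (sumRel R R') ∧
    Nonempty (restrict (sumRel R R') ≃r Sum.Lex (restrict R) (restrict R')) :=
  ⟨syncRel_sumRel hsR hsR', isOrderRel_sumRel hoR hoR' hdisj, ⟨restrictSumRelIso hdisj⟩⟩
end

section
/- Let R be a synchronous order on ℕ such that ℕ ∖ supp(R) is finite. Then there exists a complete synchronous order R' on ℕ such that (ℕ, R') is order-isomorphic to (supp(R), R). -/
namespace Language

variable {α : Type*} {L : Language α}

theorem IsRegular.leftQuotient (h : L.IsRegular) (u : List α) : (L.leftQuotient u).IsRegular :=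
  .of_finite_range_leftQuotient <| h.finite_range_leftQuotient.subset <| by
    rintro _ ⟨v, rfl⟩
    exact ⟨u ++ v, L.leftQuotient_append u v⟩

theorem isRegular_of_finite (h : (L : Set (List α)).Finite) : L.IsRegular := by
  classical
  have hpre : {x : List α | ∃ w ∈ L, x <+: w}.Finite :=
    (h.biUnion fun w _ => w.inits.toFinset.finite_toSet).subset fun x ⟨w, hw, hxw⟩ =>
      Set.mem_biUnion hw (List.mem_toFinset.mpr (List.mem_inits _ _ |>.mpr hxw))
  refine .of_finite_range_leftQuotient <| ((hpre.image L.leftQuotient).insert 0).subset ?_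
  rintro _ ⟨x, rfl⟩
  by_cases hx : ∃ w ∈ L, x <+: w
  · exact Or.inr ⟨x, hx, rfl⟩
  · exact Or.inl (Set.eq_empty_of_forall_notMem fun v hv => hx ⟨_, hv, List.prefix_append x v⟩)

theorem isRegular_iSup {ι : Type*} [Finite ι] (f : ι → Language α)
    (h : ∀ i, (f i).IsRegular) : (⨆ i, f i).IsRegular := by
  have := Fintype.ofFinite ι
  rw [← Finset.sup_univ_eq_iSup]
  exact Finset.sup_induction (isRegular_of_finite Set.finite_empty) (fun _ h₁ _ h₂ => h₁.add h₂)
    fun i _ => h i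

theorem IsRegular.image_cons (h : L.IsRegular) (a : α) :
    Language.IsRegular ((a :: ·) '' L) := by
  refine .of_finite_range_leftQuotient <|
    ((h.finite_range_leftQuotient.insert 0).insert ((a :: ·) '' L)).subset ?_
  rintro _ ⟨_ | ⟨b, x⟩, rfl⟩
  · exact Or.inl rfl
  · right
    by_cases hb : b = a
    · subst hb
      refine Or.inr ⟨x, Set.ext fun v => ?_⟩
      exact (List.cons_injective.mem_set_image (s := (L : Set (List α)))).symm
    · refine Or.inl (Set.eq_empty_of_forall_notMem ?_)
      rintro v ⟨w, -, hw⟩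
      exact hb (List.cons_eq_cons.mp hw).1.symm

theorem IsRegular.image_append_left_s8 (h : L.IsRegular) (u : List α) :
    Language.IsRegular ((u ++ ·) '' L) := by
  induction u with
  | nil => rwa [show (([] ++ ·) '' L : Set (List α)) = L from Set.image_id' L]
  | cons a u ih =>
    rw [show ((a :: u ++ ·) '' L : Set (List α)) = (a :: ·) '' ((u ++ ·) '' L) from
      (Set.image_image (a :: ·) (u ++ ·) L).symm]
    exact ih.image_cons a

theorem IsRegular.image_of_map_append [Finite α] {f : List α → List α} (N : ℕ)
    (hf : ∀ u v, u.length = N → f (u ++ v) = f u ++ v) (h : L.IsRegular) :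
    Language.IsRegular (f '' L) := by
  have : Finite {u : List α // u.length = N} := (List.finite_length_eq α N).to_subtype
  let short : Language α := f '' {w ∈ L | w.length < N}
  let long : Language α := ⨆ u : {u : List α // u.length = N}, (f u ++ ·) '' L.leftQuotient u
  have hsplit : short + long = f '' L := by
    ext w
    rw [mem_add, show w ∈ long ↔ _ from mem_iSup]
    constructor
    · rintro (⟨w', ⟨hw', -⟩, rfl⟩ | ⟨⟨u, hu⟩, v, hv, rfl⟩)
      · exact ⟨w', hw', rfl⟩
      · exact ⟨u ++ v, hv, hf u v hu⟩
    · rintro ⟨w', hw', rfl⟩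
      by_cases hlt : w'.length < N
      · exact Or.inl ⟨w', ⟨hw', hlt⟩, rfl⟩
      · refine Or.inr ⟨⟨w'.take N, by simp; omega⟩, w'.drop N, ?_, ?_⟩
        · show w'.take N ++ w'.drop N ∈ L
          rwa [List.take_append_drop]
        · exact (hf _ _ (by simp; omega)).symm.trans (congrArg f (List.take_append_drop N w'))
  rw [← hsplit]
  exact (isRegular_of_finite (((List.finite_length_lt α N).subset fun _ hw => hw.2).image f)).add
    (isRegular_iSup _ fun u => (h.leftQuotient u).image_append_left_s8 (f u))

end Language

section KeepPositions

variable {α : Type*} (p : ℕ → Prop) [DecidablePred p]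

def keepPositions (u : List α) : List α :=
  (u.zipIdx.filter (fun x => p x.2)).map Prod.fst

theorem keepPositions_append (u v : List α) :
    keepPositions p (u ++ v) = keepPositions p u ++ keepPositions (fun i => p (u.length + i)) v := by
  rw [keepPositions, List.zipIdx_append, List.filter_append, List.map_append, Nat.zero_add,
    List.zipIdx_eq_map_add (i := u.length), List.filter_map, List.map_map]
  rfl

variable {p} in
theorem keepPositions_of_forall (hp : ∀ i, p i) (u : List α) :
    keepPositions p u = u := by
  simp [keepPositions, hp]

theorem keepPositions_map_range (g : ℕ → α) (n : ℕ) :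
    keepPositions p ((List.range n).map g) = ((List.range n).filter p).map g := by
  induction n with
  | zero => simp [keepPositions]
  | succ n ih =>
    rw [List.range_succ, List.map_append, keepPositions_append, ih]
    by_cases hn : p n <;> simp [keepPositions, hn]

end KeepPositions

namespace Nat

variable {p : ℕ → Prop} [DecidablePred p]

theorem count_lt_count_iff {i k : ℕ} (hi : p i) : count p i < count p k ↔ i < k :=
  ⟨lt_of_count_lt_count, count_strict_mono hi⟩

variable (p) in
theorem map_count_filter_range (n : ℕ) :
    ((List.range n).filter p).map (count p) = List.range (count p n) := by
  induction n with
  | zero => simp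
  | succ n ih =>
    rw [List.range_succ, List.filter_append, List.map_append, ih, count_succ]
    by_cases hn : p n <;> simp [hn, List.range_succ]

end Nat

theorem keepPositions_encPair (p : ℕ → Prop) [DecidablePred p] (k l : ℕ) :
    keepPositions p (encPair k l) = encPair (Nat.count p k) (Nat.count p l) := by
  have hmono := Nat.count_monotone p
  rw [encPair, keepPositions_map_range, encPair, ← hmono.map_max, ← hmono.map_min,
    ← Nat.map_count_filter_range, List.map_map]
  refine List.map_congr_left fun i hi => ?_
  have hi : p i := by simpa using (List.mem_filter.mp hi).2
  simp only [Function.comp_apply, Nat.count_lt_count_iff hi]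

noncomputable def nthEquiv {s : Set ℕ} [DecidablePred (· ∈ s)] (hs : s.Infinite) : ℕ ≃ s where
  toFun n := ⟨Nat.nth (· ∈ s) n, Nat.nth_mem_of_infinite hs n⟩
  invFun x := Nat.count (· ∈ s) x
  left_inv := Nat.count_nth_of_infinite (p := (· ∈ s)) hs
  right_inv x := Subtype.ext (Nat.nth_count (p := (· ∈ s)) x.2)

theorem SyncRel.comp_nth {R : ℕ → ℕ → Prop} (hR : SyncRel R) {s : Set ℕ}
    [DecidablePred (· ∈ s)] (hs : sᶜ.Finite) (hsupp : supp R ⊆ s) :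
    SyncRel fun k l => R (Nat.nth (· ∈ s) k) (Nat.nth (· ∈ s) l) := by
  have hinf : s.Infinite := Set.infinite_of_finite_compl hs
  obtain ⟨N, hN⟩ : ∃ N, ∀ i ∉ s, i < N := by
    obtain ⟨b, hb⟩ := hs.bddAbove
    exact ⟨b + 1, fun i hi => Nat.lt_succ_of_le (hb hi)⟩
  have hlang : keepPositions (· ∈ s) '' {w | ∃ k l, R k l ∧ encPair k l = w} =
      {w | ∃ k l, R (Nat.nth (· ∈ s) k) (Nat.nth (· ∈ s) l) ∧ encPair k l = w} := by
    ext w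
    constructor
    · rintro ⟨_, ⟨a, b, hab, rfl⟩, rfl⟩
      have ha : a ∈ s := hsupp ⟨b, .inl hab⟩
      have hb : b ∈ s := hsupp ⟨a, .inr hab⟩
      refine ⟨_, _, ?_, (keepPositions_encPair _ a b).symm⟩
      rwa [Nat.nth_count (p := (· ∈ s)) ha, Nat.nth_count (p := (· ∈ s)) hb]
    · rintro ⟨k, l, hkl, rfl⟩
      refine ⟨_, ⟨_, _, hkl, rfl⟩, ?_⟩
      rw [keepPositions_encPair, Nat.count_nth_of_infinite (p := (· ∈ s)) hinf,
        Nat.count_nth_of_infinite (p := (· ∈ s)) hinf]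
  unfold SyncRel
  rw [← hlang]
  refine hR.image_of_map_append N fun u v hu => ?_
  have hshift : ∀ i, u.length + i ∈ s := fun i => by_contra fun hi => by have := hN _ hi; omega
  rw [keepPositions_append, keepPositions_of_forall hshift]

theorem IsOrderRel.comp {R : ℕ → ℕ → Prop} (h : IsOrderRel R) (f : ℕ → ℕ) :
    IsOrderRel fun k l => R (f k) (f l) :=
  ⟨fun _ _ _ hxy hyz => h.1 _ _ _ hxy hyz, fun ⟨_, _, hxy, hyx⟩ => h.2 ⟨_, _, hxy, hyx⟩⟩

theorem supp_comp_equiv {R : ℕ → ℕ → Prop} (e : ℕ ≃ supp R) :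
    supp (fun k l => R (e k) (e l)) = Set.univ :=
  Set.eq_univ_of_forall fun k => by
    obtain ⟨y, hy⟩ := (e k).2
    have hy' : y ∈ supp R := hy.elim (fun h => ⟨_, .inr h⟩) (fun h => ⟨_, .inl h⟩)
    exact ⟨e.symm ⟨y, hy'⟩, by simpa using hy⟩

theorem finite_complement_completion (R : ℕ → ℕ → Prop)
    (hs : SyncRel R) (ho : IsOrderRel R) (hfin : (supp R)ᶜ.Finite) :
    ∃ R' : ℕ → ℕ → Prop, SyncRel R' ∧ IsOrderRel R' ∧ supp R' = Set.univ ∧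
      Nonempty (R' ≃r restrict R) := by
  classical
  let e := nthEquiv (Set.infinite_of_finite_compl hfin)
  exact ⟨fun k l => R (e k) (e l), hs.comp_nth hfin le_rfl, ho.comp _, supp_comp_equiv e,
    ⟨RelIso.preimage e (restrict R)⟩⟩
end

section
/- Let R be a complete synchronous linear order on ℕ. Then there exist t ≥ 0 and p > 0 such that for every α with t ≤ α < t + p, either R(α + kp, α + (k+1)p) holds for all k ≥ 0, or R(α + (k+1)p, α + kp) holds for all k ≥ 0. -/
lemma my_countP_range_lt (k : ℕ) (n : ℕ) :
    (List.range n).countP (fun i => decide (i < k)) = min k n := by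
  induction n with
  | zero => simp
  | succ n ih =>
    rw [List.range_succ, List.countP_append, ih]
    by_cases h : n < k <;> simp [h] <;> omega

lemma encPair_count2 (k l : ℕ) : (encPair k l).countP (fun c => decide (c ≠ 2)) = k := by
  unfold encPair
  rw [List.countP_map]
  rw [List.countP_congr (q := fun i => decide (i < k)) ?_, my_countP_range_lt]
  · omega
  · intro i hi
    simp only [List.mem_range] at hi
    simp only [Function.comp_apply]
    by_cases h1 : i < min k l
    · have : i < k := by omega
      simp [h1, this]
    · by_cases h2 : i < k <;> simp [h1, h2]

lemma encPair_count1 (k l : ℕ) : (encPair k l).countP (fun c => decide (c ≠ 1)) = l := by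
  unfold encPair
  rw [List.countP_map]
  rw [List.countP_congr (q := fun i => decide (i < l)) ?_, my_countP_range_lt]
  · omega
  · intro i hi
    simp only [List.mem_range] at hi
    simp only [Function.comp_apply]
    by_cases h1 : i < min k l
    · have : i < l := by omega
      simp [h1, this]
    · by_cases h2 : i < k
      · have hil : ¬ i < l := by omega
        simp [h1, h2, hil]
      · have hil : i < l := by omega
        simp [h1, h2, hil]

lemma encPair_inj {k l k' l' : ℕ} (h : encPair k l = encPair k' l') : k = k' ∧ l = l' := by
  constructor
  · rw [← encPair_count2 k l, h, encPair_count2]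
  · rw [← encPair_count1 k l, h, encPair_count1]

lemma encPair_fwd (a p : ℕ) :
    encPair a (a + p) = List.replicate a 0 ++ List.replicate p 2 := by
  unfold encPair
  rw [min_eq_left (Nat.le_add_right a p), max_eq_right (Nat.le_add_right a p),
    List.range_add, List.map_append, List.map_map]
  congr 1
  · rw [List.eq_replicate_iff]
    refine ⟨by simp, ?_⟩
    intro b hb
    simp only [List.mem_map, List.mem_range] at hb
    obtain ⟨i, hi, rfl⟩ := hb
    simp [hi]
  · rw [List.eq_replicate_iff]
    refine ⟨by simp, ?_⟩
    intro b hb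
    simp only [List.mem_map, List.mem_range, Function.comp_apply] at hb
    obtain ⟨i, hi, rfl⟩ := hb
    have h1 : ¬ a + i < a := by omega
    simp [h1]

lemma encPair_bwd (a p : ℕ) :
    encPair (a + p) a = List.replicate a 0 ++ List.replicate p 1 := by
  unfold encPair
  rw [min_eq_right (Nat.le_add_right a p), max_eq_left (Nat.le_add_right a p),
    List.range_add, List.map_append, List.map_map]
  congr 1
  · rw [List.eq_replicate_iff]
    refine ⟨by simp, ?_⟩
    intro b hb
    simp only [List.mem_map, List.mem_range] at hb
    obtain ⟨i, hi, rfl⟩ := hb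
    simp [hi]
  · rw [List.eq_replicate_iff]
    refine ⟨by simp, ?_⟩
    intro b hb
    simp only [List.mem_map, List.mem_range, Function.comp_apply] at hb
    obtain ⟨i, hi, rfl⟩ := hb
    have h1 : ¬ a + i < a := by omega
    have h2 : a + i < a + p := by omega
    simp [h1, h2]

theorem complete_linear_sync_progressions (R : ℕ → ℕ → Prop)
    (hs : SyncRel R) (ho : IsOrderRel R) (hc : supp R = Set.univ)
    (hl : IsLinearRel R) :
    ∃ t p : ℕ, 0 < p ∧ ∀ α, t ≤ α → α < t + p →
      (∀ k : ℕ, R (α + k * p) (α + (k + 1) * p)) ∨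
      (∀ k : ℕ, R (α + (k + 1) * p) (α + k * p)) := by
  obtain ⟨σ, fσ, M, hM⟩ := hs
  set q : ℕ → σ := fun a => M.evalFrom M.start (List.replicate a (0 : Fin 3)) with hq
  have hfwd : ∀ a p : ℕ, R a (a + p) ↔ M.evalFrom (q a) (List.replicate p 2) ∈ M.accept := by
    intro a p
    have hmem : (List.replicate a (0 : Fin 3) ++ List.replicate p 2) ∈ M.accepts ↔
        M.evalFrom (q a) (List.replicate p 2) ∈ M.accept := by
      rw [DFA.mem_accepts, DFA.eval, DFA.evalFrom_of_append]
    rw [← hmem, hM]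
    constructor
    · intro h; exact ⟨a, a + p, h, encPair_fwd a p⟩
    · rintro ⟨k, l, hR, hkl⟩
      rw [← encPair_fwd a p] at hkl
      obtain ⟨rfl, rfl⟩ := encPair_inj hkl
      exact hR
  have hbwd : ∀ a p : ℕ, R (a + p) a ↔ M.evalFrom (q a) (List.replicate p 1) ∈ M.accept := by
    intro a p
    have hmem : (List.replicate a (0 : Fin 3) ++ List.replicate p 1) ∈ M.accepts ↔
        M.evalFrom (q a) (List.replicate p 1) ∈ M.accept := by
      rw [DFA.mem_accepts, DFA.eval, DFA.evalFrom_of_append]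
    rw [← hmem, hM]
    constructor
    · intro h; exact ⟨a + p, a, h, encPair_bwd a p⟩
    · rintro ⟨k, l, hR, hkl⟩
      rw [← encPair_bwd a p] at hkl
      obtain ⟨rfl, rfl⟩ := encPair_inj hkl
      exact hR
  have hqstep : ∀ a, q (a + 1) = M.step (q a) 0 := by
    intro a
    simp only [hq]
    rw [List.replicate_add, DFA.evalFrom_of_append]
    rfl
  obtain ⟨i, j, hij, hqe⟩ := Finite.exists_ne_map_eq_of_infinite q
  have hP : ∃ t t' : ℕ, t < t' ∧ q t = q t' := by
    rcases Nat.lt_or_ge i j with h | h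
    · exact ⟨i, j, h, hqe⟩
    · exact ⟨j, i, by omega, hqe.symm⟩
  obtain ⟨t, t', htt, hqt⟩ := hP
  refine ⟨t, t' - t, by omega, ?_⟩
  set p := t' - t with hp
  have hper : ∀ a, t ≤ a → q (a + p) = q a := by
    have step : ∀ j, q (t + j + p) = q (t + j) := by
      intro j
      induction j with
      | zero =>
        have e : t + 0 + p = t' := by omega
        rw [e]
        simpa using hqt.symm
      | succ n ih =>
        have e1 : t + (n + 1) + p = (t + n + p) + 1 := by omega
        have e2 : t + (n + 1) = (t + n) + 1 := by omega
        rw [e1, e2, hqstep, hqstep, ih]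
    intro a ha
    have := step (a - t)
    rwa [show t + (a - t) + p = a + p by omega, show t + (a - t) = a by omega] at this
  intro α hα _
  have hiter : ∀ k : ℕ, q (α + k * p) = q α := by
    intro k
    induction k with
    | zero => simp
    | succ n ih =>
      rw [show α + (n + 1) * p = (α + n * p) + p by ring, hper _ (by omega), ih]
  have hcomp : R α (α + p) ∨ R (α + p) α := by
    have h1 : α ∈ supp R := by rw [hc]; trivial
    have h2 : α + p ∈ supp R := by rw [hc]; trivial
    exact hl α h1 (α + p) h2 (by omega)
  rcases hcomp with h | h
  · left
    intro k
    rw [show α + (k + 1) * p = (α + k * p) + p by ring]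
    rw [hfwd, hiter]
    exact (hfwd α p).1 h
  · right
    intro k
    rw [show α + (k + 1) * p = (α + k * p) + p by ring]
    rw [hbwd, hiter]
    exact (hbwd α p).1 h
end

section
/- A synchronous order R on ℕ has an infinite chain if and only if there exist a ∈ ℕ and p > 0 such that the arithmetic progression {a + kp : k ∈ ℕ} is a chain of R. -/
/-- A chain of an order `R`: a subset of the support whose elements are pairwise
comparable by `R`. -/
def IsChainOf (R : ℕ → ℕ → Prop) (C : Set ℕ) : Prop :=
  C ⊆ supp R ∧ ∀ a ∈ C, ∀ b ∈ C, a ≠ b → R a b ∨ R b a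

/-- An antichain of an order `R`: a subset of the support no two distinct elements
of which are comparable by `R`. -/
def IsAntichainOf (R : ℕ → ℕ → Prop) (A : Set ℕ) : Prop :=
  A ⊆ supp R ∧ ∀ a ∈ A, ∀ b ∈ A, a ≠ b → ¬R a b ∧ ¬R b a



lemma iter_eventually_periodic {σ : Type} [Fintype σ] (f : σ → σ) (x : σ)
    {i j : ℕ} (hi : Fintype.card σ ≤ i) (hj : Fintype.card σ ≤ j)
    (hmod : i % Nat.factorial (Fintype.card σ) = j % Nat.factorial (Fintype.card σ)) :
    f^[i] x = f^[j] x := by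
  set n := Fintype.card σ with hn
  -- find a < b ≤ n with f^[a] x = f^[b] x
  obtain ⟨a, b, hab, heq⟩ : ∃ a b : Fin (n+1), a ≠ b ∧ f^[(a : ℕ)] x = f^[(b : ℕ)] x := by
    have := Fintype.exists_ne_map_eq_of_card_lt (fun k : Fin (n+1) => f^[(k : ℕ)] x)
      (by simp [hn])
    obtain ⟨a, b, h1, h2⟩ := this
    exact ⟨a, b, h1, h2⟩
  -- wlog a < b
  obtain ⟨a, b, hlt, hble, heq⟩ : ∃ a b : ℕ, a < b ∧ b ≤ n ∧ f^[a] x = f^[b] x := by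
    rcases lt_or_gt_of_ne hab with h | h
    · exact ⟨a, b, h, Nat.lt_succ_iff.mp b.isLt, heq⟩
    · exact ⟨b, a, h, Nat.lt_succ_iff.mp a.isLt, heq.symm⟩
  set c := b - a with hc
  have hcpos : 0 < c := Nat.sub_pos_of_lt hlt
  have hstep : ∀ m, a ≤ m → f^[m + c] x = f^[m] x := by
    intro m hm
    have h1 : m + c = (m - a) + b := by omega
    have h2 : m = (m - a) + a := by omega
    rw [h1, Function.iterate_add_apply, ← heq, ← Function.iterate_add_apply, ← h2]
  have hmult : ∀ k m, a ≤ m → f^[m + k * c] x = f^[m] x := by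
    intro k
    induction k with
    | zero => simp
    | succ k ih =>
      intro m hm
      have : m + (k+1) * c = (m + k * c) + c := by ring
      rw [this, hstep _ (by omega), ih m hm]
  -- now conclude
  have hdvd : c ∣ Nat.factorial n := Nat.dvd_factorial hcpos (by omega)
  have key : ∀ i j : ℕ, i ≤ j → n ≤ i → i % Nat.factorial n = j % Nat.factorial n → f^[i] x = f^[j] x := by
    intro i j hij hni hm
    have hd : Nat.factorial n ∣ j - i := (Nat.modEq_iff_dvd' hij).mp hm
    obtain ⟨t, ht⟩ := hdvd.trans hd
    have ht' : j - i = t * c := by rw [ht, mul_comm]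
    have : j = i + t * c := by omega
    rw [this, hmult t i (by omega)]
  rcases le_total i j with h | h
  · exact key i j h hi hmod
  · exact (key j i h hj hmod.symm).symm

lemma evalFrom_replicate {σ : Type} (M : DFA (Fin 3) σ) (q : σ) (c : Fin 3) (i : ℕ) :
    M.evalFrom q (List.replicate i c) = (fun s => M.step s c)^[i] q := by
  induction i generalizing q with
  | zero => rfl
  | succ i ih =>
    rw [List.replicate_succ, Function.iterate_succ_apply]
    exact ih (M.step q c)

lemma encPair_le {k l : ℕ} (h : k ≤ l) :
    encPair k l = List.replicate k 0 ++ List.replicate (l - k) 2 := by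
  unfold encPair
  rw [max_eq_right h, min_eq_left h]
  have : l = k + (l - k) := by omega
  rw [this, List.range_add, List.map_append, List.map_map]
  congr 1
  · apply List.eq_replicate_iff.mpr
    constructor
    · simp
    · intro x hx
      simp only [List.mem_map, List.mem_range] at hx
      obtain ⟨i, hi, rfl⟩ := hx
      simp [hi]
  · apply List.eq_replicate_iff.mpr
    constructor
    · simp
    · intro x hx
      simp only [List.mem_map, List.mem_range] at hx
      obtain ⟨i, hi, rfl⟩ := hx
      have h1 : ¬ (k + i < k) := by omega
      simp [h1]

lemma encPair_ge {k l : ℕ} (h : l ≤ k) :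
    encPair k l = List.replicate l 0 ++ List.replicate (k - l) 1 := by
  unfold encPair
  rw [max_eq_left h, min_eq_right h]
  have : k = l + (k - l) := by omega
  rw [this, List.range_add, List.map_append, List.map_map]
  congr 1
  · apply List.eq_replicate_iff.mpr
    refine ⟨by simp, ?_⟩
    intro x hx
    simp only [List.mem_map, List.mem_range] at hx
    obtain ⟨i, hi, rfl⟩ := hx
    simp [hi]
  · apply List.eq_replicate_iff.mpr
    refine ⟨by simp, ?_⟩
    intro x hx
    simp only [List.mem_map, List.mem_range] at hx
    obtain ⟨i, hi, rfl⟩ := hx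
    have h1 : ¬ (l + i < l) := by omega
    simp [h1]
    omega


lemma decodeA {k l b m : ℕ}
    (h : encPair k l = List.replicate b 0 ++ List.replicate m 2) : k = b ∧ l = b + m := by
  rcases le_or_gt k l with hkl | hkl
  · rw [encPair_le hkl] at h
    have h0 := congrArg (List.count 0) h
    have hlen := congrArg List.length h
    simp [List.count_append, List.count_replicate] at h0 hlen
    omega
  · rw [encPair_ge hkl.le] at h
    have h1 := congrArg (List.count 1) h
    simp [List.count_append, List.count_replicate] at h1
    omega

lemma decodeB {k l b m : ℕ}
    (h : encPair k l = List.replicate b 0 ++ List.replicate m 1) : l = b ∧ k = b + m := by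
  rcases le_or_gt l k with hkl | hkl
  · rw [encPair_ge hkl] at h
    have h0 := congrArg (List.count 0) h
    have hlen := congrArg List.length h
    simp [List.count_append, List.count_replicate] at h0 hlen
    omega
  · rw [encPair_le hkl.le] at h
    have h1 := congrArg (List.count 2) h
    simp [List.count_append, List.count_replicate] at h1
    omega


theorem infinite_chain_iff_arithmetic_progression (R : ℕ → ℕ → Prop)
    (hs : SyncRel R) (ho : IsOrderRel R) :
    (∃ C : Set ℕ, C.Infinite ∧ IsChainOf R C) ↔
    (∃ a p : ℕ, 0 < p ∧ IsChainOf R {x | ∃ k : ℕ, x = a + k * p}) := by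
  constructor
  · rintro ⟨C, hCinf, hCsub, hCcomp⟩
    obtain ⟨σ, instF, M, hM⟩ := hs
    set n := Fintype.card σ with hn
    set N := Nat.factorial n with hNdef
    have hN : 0 < N := Nat.factorial_pos n
    have hnN : n ≤ N := Nat.self_le_factorial n
    have key : ∀ (c : Fin 3) (q : σ) (i j : ℕ), n ≤ i → n ≤ j → i % N = j % N →
        M.evalFrom q (List.replicate i c) = M.evalFrom q (List.replicate j c) := by
      intro c q i j hi hj hm
      rw [evalFrom_replicate, evalFrom_replicate]
      exact iter_eventually_periodic _ q hi hj hm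
    -- find suitable u < v in C with same residue mod N
    haveI : Infinite C := Set.infinite_coe_iff.mpr hCinf
    obtain ⟨r, hr⟩ := Finite.exists_infinite_fiber
      (fun x : C => (⟨(x : ℕ) % N, Nat.mod_lt _ hN⟩ : Fin N))
    have hD : (Subtype.val '' ((fun x : C => (⟨(x : ℕ) % N, Nat.mod_lt _ hN⟩ : Fin N)) ⁻¹' {r})).Infinite := by
      apply Set.Infinite.image
      · exact Subtype.val_injective.injOn
      · exact Set.infinite_coe_iff.mp hr
    obtain ⟨u, hu, hun⟩ := hD.exists_gt n
    obtain ⟨v, hv, huv⟩ := hD.exists_gt (u + n)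
    obtain ⟨⟨u', huC⟩, hu'r, rfl⟩ := hu
    obtain ⟨⟨v', hvC⟩, hv'r, rfl⟩ := hv
    simp only [Set.mem_preimage, Set.mem_singleton_iff] at hu'r hv'r
    change n < u' at hun
    change u' + n < v' at huv
    have hmod : u' % N = v' % N := by
      have h1 := congrArg (Fin.val) hu'r
      have h2 := congrArg (Fin.val) hv'r
      simp at h1 h2
      omega
    have hsub0 : (v' - u') % N = 0 := Nat.sub_mod_eq_zero_of_mod_eq hmod.symm
    have hnu : n ≤ u' := hun.le
    have hnvu : n ≤ v' - u' := by omega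
    rcases hCcomp u' huC v' hvC (by omega) with hR | hR
    -- Case A : R u' v' ; word is B^u' R^(v'-u')
    · have hacc : (List.replicate u' 0 ++ List.replicate (v' - u') 2) ∈ M.accepts := by
        rw [hM]
        exact ⟨u', v', hR, encPair_le (by omega)⟩
      have pump : ∀ b m, n ≤ b → n ≤ m → b % N = u' % N → m % N = (v' - u') % N →
          R b (b + m) := by
        intro b m hb hm hbu hmv
        have hacc2 : (List.replicate b 0 ++ List.replicate m 2) ∈ M.accepts := by
          rw [DFA.mem_accepts] at hacc ⊢
          rw [DFA.eval, DFA.evalFrom_of_append] at hacc ⊢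
          rw [key 0 M.start b u' hb hnu hbu]
          rw [key 2 _ m (v' - u') hm hnvu hmv]
          exact hacc
        rw [hM] at hacc2
        obtain ⟨k, l, hkl, henc⟩ := hacc2
        obtain ⟨rfl, rfl⟩ := decodeA henc
        exact hkl
      have cons : ∀ k : ℕ, R (u' + k * N) (u' + k * N + N) := by
        intro k
        refine pump (u' + k * N) N ?_ hnN (Nat.add_mul_mod_self_right _ _ _) ?_
        · omega
        · rw [Nat.mod_self, hsub0]
      have cons' : ∀ j : ℕ, R (u' + j * N) (u' + (j + 1) * N) := by
        intro j
        have he : u' + (j + 1) * N = u' + j * N + N := by ring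
        rw [he]; exact cons j
      have chainA : ∀ d k : ℕ, R (u' + k * N) (u' + (k + d + 1) * N) := by
        intro d
        induction d with
        | zero => intro k; exact cons' k
        | succ d ih =>
          intro k
          exact ho.1 _ _ _ (ih k) (cons' (k + d + 1))
      refine ⟨u', N, hN, ?_, ?_⟩
      · rintro x ⟨k, rfl⟩
        exact ⟨u' + k * N + N, Or.inl (cons k)⟩
      · rintro a ⟨k, rfl⟩ b ⟨l, rfl⟩ hne
        have hklne : k ≠ l := by rintro rfl; exact hne rfl
        rcases Nat.lt_or_ge k l with h | h
        · left
          have he : k + (l - k - 1) + 1 = l := by omega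
          rw [← he]; exact chainA (l - k - 1) k
        · right
          have hlk : l < k := by omega
          have he : l + (k - l - 1) + 1 = k := by omega
          rw [← he]; exact chainA (k - l - 1) l
    -- Case B : R v' u' ; word is B^u' L^(v'-u')
    · have hacc : (List.replicate u' 0 ++ List.replicate (v' - u') 1) ∈ M.accepts := by
        rw [hM]
        exact ⟨v', u', hR, encPair_ge (by omega)⟩
      have pump : ∀ b m, n ≤ b → n ≤ m → b % N = u' % N → m % N = (v' - u') % N →
          R (b + m) b := by
        intro b m hb hm hbu hmv
        have hacc2 : (List.replicate b 0 ++ List.replicate m 1) ∈ M.accepts := by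
          rw [DFA.mem_accepts] at hacc ⊢
          rw [DFA.eval, DFA.evalFrom_of_append] at hacc ⊢
          rw [key 0 M.start b u' hb hnu hbu]
          rw [key 1 _ m (v' - u') hm hnvu hmv]
          exact hacc
        rw [hM] at hacc2
        obtain ⟨k, l, hkl, henc⟩ := hacc2
        obtain ⟨rfl, rfl⟩ := decodeB henc
        exact hkl
      have cons : ∀ k : ℕ, R (u' + k * N + N) (u' + k * N) := by
        intro k
        refine pump (u' + k * N) N ?_ hnN (Nat.add_mul_mod_self_right _ _ _) ?_
        · omega
        · rw [Nat.mod_self, hsub0]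
      have cons' : ∀ j : ℕ, R (u' + (j + 1) * N) (u' + j * N) := by
        intro j
        have he : u' + (j + 1) * N = u' + j * N + N := by ring
        rw [he]; exact cons j
      have chainB : ∀ d k : ℕ, R (u' + (k + d + 1) * N) (u' + k * N) := by
        intro d
        induction d with
        | zero => intro k; exact cons' k
        | succ d ih =>
          intro k
          exact ho.1 _ _ _ (cons' (k + d + 1)) (ih k)
      refine ⟨u', N, hN, ?_, ?_⟩
      · rintro x ⟨k, rfl⟩
        exact ⟨u' + k * N + N, Or.inr (cons k)⟩
      · rintro a ⟨k, rfl⟩ b ⟨l, rfl⟩ hne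
        have hklne : k ≠ l := by rintro rfl; exact hne rfl
        rcases Nat.lt_or_ge k l with h | h
        · right
          have he : k + (l - k - 1) + 1 = l := by omega
          rw [← he]; exact chainB (l - k - 1) k
        · left
          have hlk : l < k := by omega
          have he : l + (k - l - 1) + 1 = k := by omega
          rw [← he]; exact chainB (k - l - 1) l
  · rintro ⟨a, p, hp, hchain⟩
    refine ⟨_, ?_, hchain⟩
    apply Set.infinite_of_injective_forall_mem (f := fun k : ℕ => a + k * p)
    · intro x y hxy
      simp only at hxy
      exact Nat.eq_of_mul_eq_mul_right hp (by omega)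
    · intro k
      exact ⟨k, rfl⟩
end

section
/- Let R be a complete linear order on ℕ, and let t ≥ 0 and p > 0 satisfy: (i) for all a,b ≥ t, R(a+p, b+p) ↔ R(a,b); (ii) for all a,b with b ≥ a + p, R(a, b+p) ↔ R(a,b); (iii) for all a,b with a ≥ b + p, R(a+p, b) ↔ R(a,b). Suppose t ≤ α < β < t + p, suppose R(α + kp, α + (k+1)p) holds for all k ≥ 0 (the progression at α is ascending) and R(β + (k+1)p, β + kp) holds for all k ≥ 0 (the progression at β is descending), and suppose R(α, β + p) and R(α + 2p, β). Then R(α + kp, β + ℓp) holds for all k, ℓ ≥ 0. -/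
theorem ascending_below_descending (R : ℕ → ℕ → Prop)
    (ho : IsOrderRel R) (hc : supp R = Set.univ) (hl : IsLinearRel R)
    (t p : ℕ) (hp : 0 < p)
    (h1 : ∀ a b, t ≤ a → t ≤ b → (R (a + p) (b + p) ↔ R a b))
    (h2 : ∀ a b, a + p ≤ b → (R a (b + p) ↔ R a b))
    (h3 : ∀ a b, b + p ≤ a → (R (a + p) b ↔ R a b))
    (α β : ℕ) (htα : t ≤ α) (hαβ : α < β) (hβ : β < t + p)
    (hasc : ∀ k : ℕ, R (α + k * p) (α + (k + 1) * p))
    (hdesc : ∀ k : ℕ, R (β + (k + 1) * p) (β + k * p))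
    (h4 : R α (β + p)) (h5 : R (α + 2 * p) β) :
    ∀ k l : ℕ, R (α + k * p) (β + l * p) := by
  have htrans := ho.1
  have hA : ∀ k, R (α + k * p) β := by
    intro k
    induction k with
    | zero =>
      have hd := hdesc 0
      norm_num at hd ⊢
      exact htrans _ _ _ h4 hd
    | succ n ih =>
      match n, ih with
      | 0, _ =>
        have ha := hasc 1
        norm_num at ha ⊢
        exact htrans _ _ _ ha h5
      | 1, _ =>
        norm_num
        exact h5
      | Nat.succ (Nat.succ m), ih =>
        have hle : β + p ≤ α + (m + 2) * p := by nlinarith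
        have := (h3 (α + (m + 2) * p) β hle).mpr ih
        have heq : α + (m + 2) * p + p = α + (m + 2 + 1) * p := by ring
        rwa [heq] at this
  have hB : ∀ l, R α (β + l * p) := by
    intro l
    induction l with
    | zero =>
      have hd := hdesc 0
      norm_num at hd ⊢
      exact htrans _ _ _ h4 hd
    | succ n ih =>
      match n, ih with
      | 0, _ =>
        simpa using h4
      | Nat.succ m, ih =>
        have hle : α + p ≤ β + (m + 1) * p := by nlinarith
        have := (h2 α (β + (m + 1) * p) hle).mpr ih
        have heq : β + (m + 1) * p + p = β + (m + 1 + 1) * p := by ring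
        rwa [heq] at this
  intro k l
  induction k generalizing l with
  | zero => simpa using hB l
  | succ n ih =>
    cases l with
    | zero => simpa using hA (n + 1)
    | succ m =>
      have h := (h1 (α + n * p) (β + m * p) (le_trans htα (Nat.le_add_right _ _))
        (le_trans (le_trans htα hαβ.le) (Nat.le_add_right _ _))).mpr (ih m)
      have e1 : α + n * p + p = α + (n + 1) * p := by ring
      have e2 : β + m * p + p = β + (m + 1) * p := by ring
      rwa [e1, e2] at h
end
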